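/- Fix a type X with decidable equality, m : ℕ, a finite set U : Finset X, and sets S : Fin m → Finset X with S i ⊆ U for every i. Let i₁, …, i_k be a list of k indices in Fin m. Then there exists a membership decision tree T with exactly k internal nodes such that for every x : X, eval T x = in if and only if x ∈ S i₁ ∪ … ∪ S i_k. In particular, if S i₁ ∪ … ∪ S i_k = U, then eval T e = in for every e ∈ U and eval T b = out for every b ∉ U. -/
import Mathlib


/-- A decision tree: either a leaf with a label, or an internal node with a predicate,
a false-subtree and a true-subtree. -/
inductive DTree (X Y : Type*) where
  | leaf (y : Y) : DTree X Y
  | node (p : X → Bool) (f t : DTree X Y) : DTree X Y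

namespace DTree

variable {X Y : Type*}

/-- Evaluation of a decision tree on an input. -/
def eval : DTree X Y → X → Y
  | leaf y, _ => y
  | node p f t, x => if p x then t.eval x else f.eval x

/-- Size of a decision tree: the number of internal nodes. -/
def size : DTree X Y → ℕ
  | leaf _ => 0
  | node _ f t => f.size + t.size + 1

end DTree

/-- The two-element type of labels `{in, out}`. -/
inductive Lab where
  | inn : Lab
  | out : Lab
deriving DecidableEq

/-- A membership decision tree: every internal-node predicate is
`fun x => decide (x ∈ S i)` for some `i : Fin m`. -/
def IsMemTree {X : Type*} [DecidableEq X] {m : ℕ} (S : Fin m → Finset X) :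
    DTree X Lab → Prop
  | DTree.leaf _ => True
  | DTree.node p f t =>
      (∃ i : Fin m, p = fun x => decide (x ∈ S i)) ∧ IsMemTree S f ∧ IsMemTree S t

/-- Forward direction of the Set Cover reduction: a list of `k` indices yields a
membership decision tree with exactly `k` internal nodes computing membership in
the union of the corresponding sets; in particular, if that union is `U`, the tree
labels every element of `U` with `in` and every element outside `U` with `out`. -/
theorem exists_memTree_of_index_list
    {X : Type*} [DecidableEq X] (m : ℕ) (U : Finset X) (S : Fin m → Finset X)
    (hS : ∀ i, S i ⊆ U) (L : List (Fin m)) :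
    ∃ T : DTree X Lab, IsMemTree S T ∧ T.size = L.length ∧
      (∀ x : X, T.eval x = Lab.inn ↔ ∃ i ∈ L, x ∈ S i) ∧
      ((∀ x : X, x ∈ U ↔ ∃ i ∈ L, x ∈ S i) →
        (∀ e ∈ U, T.eval e = Lab.inn) ∧ (∀ b : X, b ∉ U → T.eval b = Lab.out)) := by
  have main : ∃ T : DTree X Lab, IsMemTree S T ∧ T.size = L.length ∧
      (∀ x : X, T.eval x = Lab.inn ↔ ∃ i ∈ L, x ∈ S i) := by
    induction L with
    | nil =>
      refine ⟨DTree.leaf Lab.out, trivial, rfl, fun x => ?_⟩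
      simp [DTree.eval]
    | cons i L ih =>
      obtain ⟨T, hmem, hsz, hev⟩ := ih
      refine ⟨DTree.node (fun x => decide (x ∈ S i)) T (DTree.leaf Lab.inn),
        ⟨⟨i, rfl⟩, hmem, trivial⟩, by simp [DTree.size, hsz], fun x => ?_⟩
      by_cases hx : x ∈ S i <;> simp [DTree.eval, hx, hev x]
  obtain ⟨T, hmem, hsz, hev⟩ := main
  refine ⟨T, hmem, hsz, hev, fun hU => ⟨fun e he => (hev e).2 ((hU e).1 he),
    fun b hb => ?_⟩⟩
  cases h : T.eval b with
  | inn => exact absurd ((hU b).2 ((hev b).1 h)) hb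
  | out => rfl
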